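/- Let G be a bridgeless graph with d(G)=4 and let uv be an edge with l_G(uv) = g*(G) = 9. Then each of the sets S_{1,2}, S_{2,1}, S_{2,3}, S_{3,2}, S_{3,4}, S_{4,3}, S_{4,4} is nonempty; moreover every vertex of S_{1,2} has a neighbor in S_{2,3}, every vertex of S_{2,1} has a neighbor in S_{3,2}, every vertex of S_{2,3} has a neighbor in S_{3,4}, every vertex of S_{3,2} has a neighbor in S_{4,3}, every vertex of S_{3,4} has a neighbor in S_{4,4}, every vertex of S_{4,3} has a neighbor in S_{4,4}, and every vertex of S_{4,4} has a neighbor in S_{3,4} and a neighbor in S_{4,3}. -/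

import Mathlib

/-- A multigraph: vertices `V`, edges `E`, each edge has two distinct endpoints. -/
structure Multigraph (V : Type*) (E : Type*) where
  ends : E → Sym2 V
  loopless : ∀ e, ¬ (ends e).IsDiag

namespace Multigraph

variable {V E : Type*}

/-- Adjacency in a multigraph: some edge joins `x` and `y`. -/
def Adjm (G : Multigraph V E) (x y : V) : Prop := ∃ e, G.ends e = s(x, y)

/-- The underlying simple graph of a multigraph. -/
def toSimple (G : Multigraph V E) : SimpleGraph V where
  Adj x y := x ≠ y ∧ G.Adjm x y
  symm := ⟨by
    rintro x y ⟨hne, e, he⟩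
    exact ⟨hne.symm, e, he.trans (Sym2.eq_swap)⟩⟩
  loopless := ⟨by rintro x ⟨hne, -⟩; exact hne rfl⟩

/-- Distance between two vertices (length of a shortest path). -/
noncomputable def dist (G : Multigraph V E) (x y : V) : ℕ := G.toSimple.dist x y

/-- The diameter of a multigraph. -/
noncomputable def diam (G : Multigraph V E) : ℕ := sSup {n | ∃ x y, G.dist x y = n}

/-- The multigraph obtained by deleting the edge `e₀`. -/
def deleteEdge (G : Multigraph V E) (e₀ : E) : Multigraph V {e : E // e ≠ e₀} where
  ends e := G.ends e.1
  loopless e := G.loopless e.1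

/-- A (connected) multigraph is bridgeless if deleting any single edge leaves it connected. -/
def Bridgeless (G : Multigraph V E) : Prop :=
  ∀ e : E, ((G.deleteEdge e).toSimple).Connected

/-- Walks in a multigraph, recording the edges used. -/
inductive Walk (G : Multigraph V E) : V → V → Type _
  | nil {v : V} : Walk G v v
  | cons {x y z : V} (e : E) (he : G.ends e = s(x, y)) (p : Walk G y z) : Walk G x z

namespace Walk

variable {G : Multigraph V E}

/-- The length (number of edges) of a walk. -/
def length : ∀ {x y : V}, G.Walk x y → ℕ
  | _, _, .nil => 0
  | _, _, .cons _ _ p => p.length + 1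

/-- The list of edges of a walk. -/
def edges : ∀ {x y : V}, G.Walk x y → List E
  | _, _, .nil => []
  | _, _, .cons e _ p => e :: p.edges

/-- The list of vertices of a walk. -/
def support : ∀ {x y : V}, G.Walk x y → List V
  | x, _, .nil => [x]
  | x, _, .cons _ _ p => x :: p.support

/-- A closed walk is a cycle if its edges are distinct and its vertices
(other than the repeated base point) are distinct. -/
def IsCycle {v : V} (p : G.Walk v v) : Prop :=
  p.edges.Nodup ∧ p.support.tail.Nodup ∧ 0 < p.length

end Walk

/-- The edge girth of `e`: the length of a shortest cycle containing `e`. -/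
noncomputable def edgeGirth (G : Multigraph V E) (e : E) : ℕ :=
  sInf {n | ∃ (v : V) (p : G.Walk v v), p.IsCycle ∧ e ∈ p.edges ∧ p.length = n}

/-- The maximum edge girth `g*(G)`. -/
noncomputable def maxEdgeGirth (G : Multigraph V E) : ℕ :=
  sSup (Set.range fun e => G.edgeGirth e)

/-- An orientation of a multigraph: each edge is assigned a direction. -/
structure Orientation (G : Multigraph V E) where
  dir : E → V × V
  compat : ∀ e, s((dir e).1, (dir e).2) = G.ends e

/-- Arcs of an orientation. -/
def Orientation.DAdj {G : Multigraph V E} (o : G.Orientation) (x y : V) : Prop :=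
  ∃ e, o.dir e = (x, y)

/-- Directed distance in an orientation (`⊤` if unreachable). -/
noncomputable def Orientation.ddist {G : Multigraph V E} (o : G.Orientation) (x y : V) : ℕ∞ :=
  sInf {n : ℕ∞ | ∃ l : List V, List.Chain o.DAdj x l ∧
    (x :: l).getLast (List.cons_ne_nil x l) = y ∧ (l.length : ℕ∞) = n}

/-- An orientation is strong if every vertex is reachable from every vertex by a directed path. -/
def Orientation.IsStrong {G : Multigraph V E} (o : G.Orientation) : Prop :=
  ∀ x y : V, o.ddist x y ≠ ⊤

/-- The diameter of an orientation. -/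
noncomputable def Orientation.odiam {G : Multigraph V E} (o : G.Orientation) : ℕ∞ :=
  ⨆ (x : V) (y : V), o.ddist x y

end Multigraph

namespace Multigraph

variable {V E : Type*}

/-- `S G u v i j` is the set of vertices at distance `i` from `u` and `j` from `v`. -/
noncomputable def S (G : Multigraph V E) (u v : V) (i j : ℕ) : Set V :=
  {w | G.dist w u = i ∧ G.dist w v = j}

/-- The neighbourhood of a vertex. -/
def nbhd (G : Multigraph V E) (w : V) : Set V := {x | G.Adjm w x}

end Multigraph

/-!
Write `H = G - uv`. A shortest cycle through `uv` is `uv` followed by a shortest `v`–`u` path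
of `H`, so `l_G(uv) = 9` means `d_H(u, v) = 8`, and since `G = H + uv`,
`d_G(x, y) = min (d_H(x, y)) (d_H(x, u) + 1 + d_H(v, y)) (d_H(x, v) + 1 + d_H(u, y))`.
Combined with `d_H(x, u) + d_H(x, v) ≥ 8` and `d(G) = 4`, this identifies `S_{k, min (k+1) 4}`
(for `k ≤ 4`) with the sphere of radius `k` about `u` in `H`. If `d_H(w, u) = i ≤ 4`, pick `t`
with `d_H(t, u) = i + 4`: both detours through `uv` from `w` to `t` are longer than 4, so
`d_H(w, t) = 4`, and the first step of a shortest `w`–`t` path in `H` moves `w` to the sphere of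
radius `i + 1`. The sets on the side of `v` are handled by symmetry.
-/

namespace SimpleGraph

variable {V : Type*} {G H : SimpleGraph V}

lemma exists_adj_dist_eq_of_dist_eq_add_one {x y : V} {n : ℕ} (h : G.dist x y = n + 1) :
    ∃ z, G.Adj x z ∧ G.dist z y = n := by
  obtain ⟨p, hp⟩ := exists_walk_of_dist_ne_zero (G := G) (u := x) (v := y) (by omega)
  cases p with
  | nil => simp at h
  | cons hadj q =>
    refine ⟨_, hadj, le_antisymm ?_ ?_⟩
    · have := dist_le q
      rw [Walk.length_cons] at hp
      omega
    · have := hadj.reachable.dist_triangle_left y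
      rw [dist_eq_one_iff_adj.2 hadj] at this
      omega

lemma exists_dist_eq_of_le {u y : V} {k : ℕ} (hk : k ≤ G.dist y u) : ∃ x, G.dist x u = k := by
  induction hy : G.dist y u generalizing y with
  | zero => exact ⟨u, by simp; omega⟩
  | succ n ih =>
    rcases (hy ▸ hk).lt_or_eq with hlt | rfl
    · obtain ⟨z, -, hz⟩ := exists_adj_dist_eq_of_dist_eq_add_one hy
      exact ih (by omega) hz
    · exact ⟨y, hy⟩

lemma Walk.le_add_length {f : V → ℕ} (hf : ∀ a b, G.Adj a b → f a ≤ f b + 1) {x y : V}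
    (p : G.Walk x y) : f x ≤ f y + p.length := by
  induction p with
  | nil => simp
  | cons hadj q ih =>
    rw [Walk.length_cons]
    have := hf _ _ hadj
    omega

lemma Connected.dist_sup_edge (hH : H.Connected) (u v x y : V) :
    (H ⊔ edge u v).dist x y =
      min (H.dist x y) (min (H.dist x u + 1 + H.dist v y) (H.dist x v + 1 + H.dist u y)) := by
  have hG : (H ⊔ edge u v).Connected := hH.mono le_sup_left
  have hle : ∀ a b, (H ⊔ edge u v).dist a b ≤ H.dist a b :=
    fun a b => (hH.preconnected a b).dist_anti le_sup_left
  have hedge : ∀ {a b}, s(a, b) = s(u, v) → (H ⊔ edge u v).dist a b ≤ 1 := by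
    intro a b hab
    by_cases h : a = b
    · simp [h]
    · refine (dist_eq_one_iff_adj.2 (Or.inr ?_)).le
      rw [edge_adj]
      exact ⟨Sym2.eq_iff.1 hab, h⟩
  apply le_antisymm
  · have h1 : (H ⊔ edge u v).dist x y ≤ H.dist x u + 1 + H.dist v y := by
      have := hG.dist_triangle (u := x) (v := u) (w := y)
      have := hG.dist_triangle (u := u) (v := v) (w := y)
      have := hle x u
      have := hle v y
      have := hedge (a := u) (b := v) rfl
      omega
    have h2 : (H ⊔ edge u v).dist x y ≤ H.dist x v + 1 + H.dist u y := by
      have := hG.dist_triangle (u := x) (v := v) (w := y)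
      have := hG.dist_triangle (u := v) (v := u) (w := y)
      have := hle x v
      have := hle u y
      have := hedge (a := v) (b := u) Sym2.eq_swap
      omega
    exact le_min (hle x y) (le_min h1 h2)
  -- The right-hand side vanishes at `x = y` and is 1-Lipschitz in `x` along every edge.
  · obtain ⟨p, hp⟩ := hG.exists_walk_length_eq_dist x y
    rw [← hp]
    refine le_of_le_of_eq (p.le_add_length (f := fun a =>
      min (H.dist a y) (min (H.dist a u + 1 + H.dist v y) (H.dist a v + 1 + H.dist u y))) ?_)
      (by simp)
    intro a b hab
    rcases hab with hab | hab
    · have h1 := hab.reachable.dist_triangle_left y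
      have h2 := hab.reachable.dist_triangle_left u
      have h3 := hab.reachable.dist_triangle_left v
      rw [dist_eq_one_iff_adj.2 hab] at h1 h2 h3
      omega
    · rw [edge_adj] at hab
      obtain ⟨⟨rfl, rfl⟩ | ⟨rfl, rfl⟩, -⟩ := hab <;> simp only [dist_self] <;> omega

lemma Connected.dist_sup_edge_left (hH : H.Connected) (u v x : V) :
    (H ⊔ edge u v).dist x u = min (H.dist x u) (H.dist x v + 1) := by
  rw [hH.dist_sup_edge, dist_self]
  omega

lemma Connected.dist_sup_edge_right (hH : H.Connected) (u v x : V) :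
    (H ⊔ edge u v).dist x v = min (H.dist x v) (H.dist x u + 1) := by
  rw [edge_comm, hH.dist_sup_edge_left]

section Detour

variable {u v : V} {d : ℕ}

lemma le_dist_add_dist (hH : H.Connected) (huv : H.dist u v = 2 * d) (x : V) :
    2 * d ≤ H.dist x u + H.dist x v := by
  have := hH.dist_triangle (u := u) (v := x) (w := v)
  rw [dist_comm (u := u) (v := x)] at this
  omega

lemma dist_sup_edge_eq_iff (hH : H.Connected) (huv : H.dist u v = 2 * d)
    (hdiam : ∀ x y, (H ⊔ edge u v).dist x y ≤ d) {x : V} {k : ℕ} (hk : k ≤ d) :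
    (H ⊔ edge u v).dist x u = k ∧ (H ⊔ edge u v).dist x v = min (k + 1) d ↔
      H.dist x u = k := by
  have := le_dist_add_dist hH huv x
  have := hdiam x v
  rw [hH.dist_sup_edge_left, hH.dist_sup_edge_right] at *
  omega

lemma exists_adj_dist_eq_add_one (hH : H.Connected) (huv : H.dist u v = 2 * d)
    (hdiam : ∀ x y, (H ⊔ edge u v).dist x y ≤ d) (hd : d ≠ 0) {w : V}
    (hw : H.dist w u ≤ d) :
    ∃ z, H.Adj w z ∧ H.dist z u = H.dist w u + 1 := by
  obtain ⟨t, ht⟩ := exists_dist_eq_of_le (G := H) (u := u) (y := v) (k := H.dist w u + d)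
    (by rw [dist_comm (u := v), huv]; omega)
  -- Both detours from `w` to `t` through `uv` are longer than `d`.
  have hwt : H.dist w t = d := by
    have hG := hdiam w t
    have htri := hH.dist_triangle (u := t) (v := w) (w := u)
    have := le_dist_add_dist hH huv t
    rw [hH.dist_sup_edge, dist_comm (u := v), dist_comm (u := u) (v := t)] at hG
    rw [dist_comm (u := t) (v := w)] at htri
    omega
  obtain ⟨z, hwz, hzt⟩ :=
    exists_adj_dist_eq_of_dist_eq_add_one (show H.dist w t = d - 1 + 1 by omega)
  refine ⟨z, hwz, ?_⟩
  have hz := hH.dist_triangle (u := z) (v := w) (w := u)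
  have htri := hH.dist_triangle (u := t) (v := z) (w := u)
  rw [dist_comm (u := z) (v := w), dist_eq_one_iff_adj.2 hwz] at hz
  rw [dist_comm (u := t) (v := z)] at htri
  omega

end Detour

end SimpleGraph

namespace Multigraph

variable {V E : Type*} {G : Multigraph V E} {e : E} {u v : V}

lemma toSimple_adj_of_ends_eq {f : E} {x y : V} (h : G.ends f = s(x, y)) :
    G.toSimple.Adj x y :=
  ⟨fun hxy => G.loopless f (by rw [h, hxy]; exact Sym2.mk_isDiag_iff.2 rfl), f, h⟩

lemma adjm_of_adj_deleteEdge {x y : V} (h : (G.deleteEdge e).toSimple.Adj x y) : G.Adjm x y :=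
  let ⟨_, f, hf⟩ := h
  ⟨f.1, hf⟩

lemma toSimple_eq_deleteEdge_sup_edge (he : G.ends e = s(u, v)) :
    G.toSimple = (G.deleteEdge e).toSimple ⊔ SimpleGraph.edge u v := by
  ext x y
  simp only [SimpleGraph.sup_adj, SimpleGraph.edge_adj]
  constructor
  · rintro ⟨hxy, f, hf⟩
    by_cases hfe : f = e
    · subst hfe
      exact Or.inr ⟨Sym2.eq_iff.1 (hf.symm.trans he), hxy⟩
    · exact Or.inl ⟨hxy, ⟨f, hfe⟩, hf⟩
  · rintro (⟨hxy, f, hf⟩ | ⟨hxy, hne⟩)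
    · exact ⟨hxy, f.1, hf⟩
    · exact ⟨hne, e, he.trans (Sym2.eq_iff.2 (by tauto))⟩

lemma Walk.exists_walk_deleteEdge {x y : V} (p : G.Walk x y) (h : e ∉ p.edges) :
    ∃ q : (G.deleteEdge e).toSimple.Walk x y, q.length = p.length := by
  induction p with
  | nil => exact ⟨.nil, rfl⟩
  | cons f hf p ih =>
    simp only [Walk.edges, List.mem_cons, not_or] at h
    obtain ⟨q, hq⟩ := ih h.2
    exact ⟨.cons (toSimple_adj_of_ends_eq (G := G.deleteEdge e) (f := ⟨f, Ne.symm h.1⟩) hf) q,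
      by simp [Walk.length, hq]⟩

lemma exists_walk_of_walk_deleteEdge {x y : V} (q : (G.deleteEdge e).toSimple.Walk x y) :
    ∃ p : G.Walk x y, e ∉ p.edges ∧ p.edges.map G.ends = q.edges ∧ p.support = q.support ∧
      p.length = q.length := by
  induction q with
  | nil => exact ⟨.nil, by simp [Walk.edges, Walk.support, Walk.length]⟩
  | cons hadj q ih =>
    obtain ⟨p, hpe, hpedges, hpsupp, hplen⟩ := ih
    obtain ⟨-, f, hf⟩ := id hadj
    have hf' : G.ends f.1 = s(_, _) := hf
    refine ⟨.cons f.1 hf p, ?_, ?_, ?_, ?_⟩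
    · simp [Walk.edges, hpe, Ne.symm f.2]
    · simp [Walk.edges, hpedges, hf']
    · simp [Walk.support, hpsupp]
    · simp [Walk.length, hplen]

lemma Walk.exists_split_of_mem_edges {f : E} {x y : V} (p : G.Walk x y) (hf : f ∈ p.edges) :
    ∃ (c d : V) (_ : G.ends f = s(c, d)) (q : G.Walk x c) (r : G.Walk d y),
      p.length = q.length + 1 + r.length ∧ p.edges = q.edges ++ f :: r.edges := by
  induction p with
  | nil => simp [Walk.edges] at hf
  | @cons a b c g hg q ih =>
    simp only [Walk.edges, List.mem_cons] at hf
    rcases eq_or_ne f g with rfl | hne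
    · exact ⟨a, b, hg, .nil, q, by simp only [Walk.length]; omega, by simp [Walk.edges]⟩
    · obtain ⟨c', d', h, q', r', hlen, hed⟩ := ih (hf.resolve_left hne)
      exact ⟨c', d', h, .cons g hg q', r', by simp only [Walk.length]; omega,
        by simp [Walk.edges, hed]⟩

theorem edgeGirth_eq_dist_deleteEdge_add_one (he : G.ends e = s(u, v))
    (hH : (G.deleteEdge e).toSimple.Connected) :
    G.edgeGirth e = (G.deleteEdge e).toSimple.dist u v + 1 := by
  obtain ⟨q, hq, hqlen⟩ := hH.exists_path_of_dist v u
  obtain ⟨p, hpe, hpedges, hpsupp, hplen⟩ := exists_walk_of_walk_deleteEdge q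
  have hcycle : (Walk.cons e he p).IsCycle :=
    ⟨List.nodup_cons.2 ⟨hpe, List.Nodup.of_map G.ends (hpedges ▸ hq.isTrail.edges_nodup)⟩,
      by simpa only [Walk.support, List.tail_cons, hpsupp] using hq.support_nodup,
      Nat.succ_pos _⟩
  apply le_antisymm
  · refine Nat.sInf_le ⟨u, _, hcycle, List.mem_cons_self, ?_⟩
    rw [Walk.length, hplen, hqlen, SimpleGraph.dist_comm]
  · refine le_csInf ⟨_, u, _, hcycle, List.mem_cons_self, rfl⟩ ?_
    rintro n ⟨w, c, hc, hec, rfl⟩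
    obtain ⟨a, b, hab, c₁, c₂, hlen, hedges⟩ := c.exists_split_of_mem_edges hec
    have hnd := hc.1
    rw [hedges, List.nodup_append, List.nodup_cons] at hnd
    obtain ⟨r₁, hr₁⟩ :=
      c₁.exists_walk_deleteEdge fun h => hnd.2.2 e h e List.mem_cons_self rfl
    obtain ⟨r₂, hr₂⟩ := c₂.exists_walk_deleteEdge hnd.2.1.1
    have hba := SimpleGraph.dist_le (r₂.append r₁)
    rw [SimpleGraph.Walk.length_append] at hba
    rcases Sym2.eq_iff.1 (hab.symm.trans he) with ⟨rfl, rfl⟩ | ⟨rfl, rfl⟩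
    · rw [SimpleGraph.dist_comm] at hba
      omega
    · omega

-- An unbounded set of naturals has `sSup = 0`, so `diam ≠ 0` forces the distances to be bounded.
lemma dist_le_diam (h : G.diam ≠ 0) (x y : V) : G.dist x y ≤ G.diam :=
  le_csSup (not_not.1 (mt Nat.sSup_of_not_bddAbove h)) ⟨x, y, rfl⟩

lemma S_comm (G : Multigraph V E) (u v : V) (i j : ℕ) : G.S v u j i = G.S u v i j :=
  Set.ext fun _ => and_comm

section Detour

variable {d : ℕ}

lemma dist_sup_edge_le (he : G.ends e = s(u, v)) (hdiam : ∀ x y, G.dist x y ≤ d) (x y : V) :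
    ((G.deleteEdge e).toSimple ⊔ SimpleGraph.edge u v).dist x y ≤ d := by
  rw [← toSimple_eq_deleteEdge_sup_edge he]
  exact hdiam x y

lemma dist_deleteEdge_eq_of_edgeGirth_eq (he : G.ends e = s(u, v))
    (hH : (G.deleteEdge e).toSimple.Connected) (hg : G.edgeGirth e = 2 * d + 1) :
    (G.deleteEdge e).toSimple.dist u v = 2 * d := by
  have := edgeGirth_eq_dist_deleteEdge_add_one he hH
  omega

lemma mem_S_iff_dist_deleteEdge (he : G.ends e = s(u, v))
    (hH : (G.deleteEdge e).toSimple.Connected) (hg : G.edgeGirth e = 2 * d + 1)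
    (hdiam : ∀ x y, G.dist x y ≤ d) {w : V} {k : ℕ} (hk : k ≤ d) :
    w ∈ G.S u v k (min (k + 1) d) ↔ (G.deleteEdge e).toSimple.dist w u = k := by
  change G.toSimple.dist w u = k ∧ G.toSimple.dist w v = _ ↔ _
  rw [toSimple_eq_deleteEdge_sup_edge he]
  exact SimpleGraph.dist_sup_edge_eq_iff hH (dist_deleteEdge_eq_of_edgeGirth_eq he hH hg)
    (dist_sup_edge_le he hdiam) hk

lemma S_nonempty (he : G.ends e = s(u, v))
    (hH : (G.deleteEdge e).toSimple.Connected) (hg : G.edgeGirth e = 2 * d + 1)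
    (hdiam : ∀ x y, G.dist x y ≤ d) {k : ℕ} (hk : k ≤ d) :
    (G.S u v k (min (k + 1) d)).Nonempty := by
  have := dist_deleteEdge_eq_of_edgeGirth_eq he hH hg
  obtain ⟨x, hx⟩ := SimpleGraph.exists_dist_eq_of_le (G := (G.deleteEdge e).toSimple)
    (u := u) (y := v) (k := k) (by rw [SimpleGraph.dist_comm]; omega)
  exact ⟨x, (mem_S_iff_dist_deleteEdge he hH hg hdiam hk).2 hx⟩

lemma exists_adjm_of_mem_S_succ (he : G.ends e = s(u, v))
    (hH : (G.deleteEdge e).toSimple.Connected) (hg : G.edgeGirth e = 2 * d + 1)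
    (hdiam : ∀ x y, G.dist x y ≤ d) {k : ℕ} (hk : k < d) {w : V}
    (hw : w ∈ G.S u v k (k + 1)) :
    ∃ x ∈ G.S u v (k + 1) (min (k + 2) d), G.Adjm w x := by
  replace hw : w ∈ G.S u v k (min (k + 1) d) := by rwa [min_eq_left (a := k + 1) hk]
  rw [mem_S_iff_dist_deleteEdge he hH hg hdiam hk.le] at hw
  obtain ⟨z, hwz, hz⟩ := SimpleGraph.exists_adj_dist_eq_add_one hH
    (dist_deleteEdge_eq_of_edgeGirth_eq he hH hg)
    (dist_sup_edge_le he hdiam) (by omega) (hw.trans_le hk.le)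
  exact ⟨z, (mem_S_iff_dist_deleteEdge he hH hg hdiam hk).2 (hz.trans (by rw [hw])),
    adjm_of_adj_deleteEdge hwz⟩

lemma exists_adjm_of_mem_S_diag (he : G.ends e = s(u, v))
    (hH : (G.deleteEdge e).toSimple.Connected) (hg : G.edgeGirth e = 2 * d + 1)
    (hdiam : ∀ x y, G.dist x y ≤ d) (hd : d ≠ 0) {w : V} (hw : w ∈ G.S u v d d) :
    ∃ x ∈ G.S u v (d - 1) d, G.Adjm w x := by
  replace hw : w ∈ G.S u v d (min (d + 1) d) := by rwa [min_eq_right d.le_succ]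
  rw [mem_S_iff_dist_deleteEdge he hH hg hdiam le_rfl] at hw
  obtain ⟨z, hwz, hz⟩ :=
    SimpleGraph.exists_adj_dist_eq_of_dist_eq_add_one
      (show (G.deleteEdge e).toSimple.dist w u = d - 1 + 1 by omega)
  refine ⟨z, ?_, adjm_of_adj_deleteEdge hwz⟩
  have := (mem_S_iff_dist_deleteEdge he hH hg hdiam (Nat.sub_le d 1)).2 hz
  rwa [Nat.sub_add_cancel (Nat.one_le_iff_ne_zero.2 hd), min_self] at this

end Detour

end Multigraph

theorem stmt16_general {V E : Type*} (G : Multigraph V E)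
    (hbridgeless : G.Bridgeless) (hdiam : G.diam = 4)
    (u v : V) (e : E) (he : G.ends e = s(u, v))
    (hmax : G.edgeGirth e = G.maxEdgeGirth) (h9 : G.maxEdgeGirth = 9) :
    ((G.S u v 1 2).Nonempty ∧ (G.S u v 2 1).Nonempty ∧ (G.S u v 2 3).Nonempty ∧
      (G.S u v 3 2).Nonempty ∧ (G.S u v 3 4).Nonempty ∧ (G.S u v 4 3).Nonempty ∧
      (G.S u v 4 4).Nonempty) ∧
    (∀ w ∈ G.S u v 1 2, ∃ x ∈ G.S u v 2 3, G.Adjm w x) ∧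
    (∀ w ∈ G.S u v 2 1, ∃ x ∈ G.S u v 3 2, G.Adjm w x) ∧
    (∀ w ∈ G.S u v 2 3, ∃ x ∈ G.S u v 3 4, G.Adjm w x) ∧
    (∀ w ∈ G.S u v 3 2, ∃ x ∈ G.S u v 4 3, G.Adjm w x) ∧
    (∀ w ∈ G.S u v 3 4, ∃ x ∈ G.S u v 4 4, G.Adjm w x) ∧
    (∀ w ∈ G.S u v 4 3, ∃ x ∈ G.S u v 4 4, G.Adjm w x) ∧
    (∀ w ∈ G.S u v 4 4,
      (∃ x ∈ G.S u v 3 4, G.Adjm w x) ∧ (∃ x ∈ G.S u v 4 3, G.Adjm w x)) := by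
  open Multigraph in
  have hH := hbridgeless e
  have hg : G.edgeGirth e = 2 * 4 + 1 := hmax.trans h9
  have hd : ∀ x y, G.dist x y ≤ 4 := fun x y => hdiam ▸ G.dist_le_diam (by omega) x y
  have he' : G.ends e = s(v, u) := he.trans Sym2.eq_swap
  refine ⟨⟨S_nonempty he hH hg hd (k := 1) (by omega), ?_,
    S_nonempty he hH hg hd (k := 2) (by omega), ?_,
    S_nonempty he hH hg hd (k := 3) (by omega), ?_,
    S_nonempty he hH hg hd (k := 4) (by omega)⟩,
    fun _ => exists_adjm_of_mem_S_succ he hH hg hd (k := 1) (by omega), ?_,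
    fun _ => exists_adjm_of_mem_S_succ he hH hg hd (k := 2) (by omega), ?_,
    fun _ => exists_adjm_of_mem_S_succ he hH hg hd (k := 3) (by omega), ?_,
    fun _ hw => ⟨exists_adjm_of_mem_S_diag he hH hg hd (by omega) hw, ?_⟩⟩
  · simpa [S_comm] using S_nonempty he' hH hg hd (k := 1) (by omega)
  · simpa [S_comm] using S_nonempty he' hH hg hd (k := 2) (by omega)
  · simpa [S_comm] using S_nonempty he' hH hg hd (k := 3) (by omega)
  · simpa [S_comm] using fun w =>
      exists_adjm_of_mem_S_succ he' hH hg hd (k := 1) (w := w) (by omega)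
  · simpa [S_comm] using fun w =>
      exists_adjm_of_mem_S_succ he' hH hg hd (k := 2) (w := w) (by omega)
  · simpa [S_comm] using fun w =>
      exists_adjm_of_mem_S_succ he' hH hg hd (k := 3) (w := w) (by omega)
  · simpa [S_comm] using exists_adjm_of_mem_S_diag he' hH hg hd (by omega) (by rwa [S_comm])

/-- Let `G` be a bridgeless graph with `d(G) = 4` and let `uv` be an edge
with `l_G(uv) = g*(G) = 9`. Then each of `S₁₂, S₂₁, S₂₃, S₃₂, S₃₄, S₄₃, S₄₄` is nonempty;
moreover every vertex of `S₁₂` has a neighbour in `S₂₃`, every vertex of `S₂₁` has a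
neighbour in `S₃₂`, every vertex of `S₂₃` has a neighbour in `S₃₄`, every vertex of `S₃₂`
has a neighbour in `S₄₃`, every vertex of `S₃₄` has a neighbour in `S₄₄`, every vertex of
`S₄₃` has a neighbour in `S₄₄`, and every vertex of `S₄₄` has a neighbour in `S₃₄` and a
neighbour in `S₄₃`. -/
theorem stmt16 {V E : Type*} [Fintype V] [Fintype E] (G : Multigraph V E)
    (hconn : G.toSimple.Connected) (hbridgeless : G.Bridgeless) (hdiam : G.diam = 4)
    (u v : V) (e : E) (he : G.ends e = s(u, v))
    (hmax : G.edgeGirth e = G.maxEdgeGirth) (h9 : G.maxEdgeGirth = 9) :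
    ((G.S u v 1 2).Nonempty ∧ (G.S u v 2 1).Nonempty ∧ (G.S u v 2 3).Nonempty ∧
      (G.S u v 3 2).Nonempty ∧ (G.S u v 3 4).Nonempty ∧ (G.S u v 4 3).Nonempty ∧
      (G.S u v 4 4).Nonempty) ∧
    (∀ w ∈ G.S u v 1 2, ∃ x ∈ G.S u v 2 3, G.Adjm w x) ∧
    (∀ w ∈ G.S u v 2 1, ∃ x ∈ G.S u v 3 2, G.Adjm w x) ∧
    (∀ w ∈ G.S u v 2 3, ∃ x ∈ G.S u v 3 4, G.Adjm w x) ∧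
    (∀ w ∈ G.S u v 3 2, ∃ x ∈ G.S u v 4 3, G.Adjm w x) ∧
    (∀ w ∈ G.S u v 3 4, ∃ x ∈ G.S u v 4 4, G.Adjm w x) ∧
    (∀ w ∈ G.S u v 4 3, ∃ x ∈ G.S u v 4 4, G.Adjm w x) ∧
    (∀ w ∈ G.S u v 4 4,
      (∃ x ∈ G.S u v 3 4, G.Adjm w x) ∧ (∃ x ∈ G.S u v 4 3, G.Adjm w x)) :=
  stmt16_general G hbridgeless hdiam u v e he hmax h9
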